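/- arXiv:2506.19940 — 2 statements merged into one kernel-verified Lean document; each statement's English description precedes it below -/
import Mathlib

section
/- Let I be a finite set, let h = (h_{i,j})_{i,j∈I} be a matrix of continuous functions on [0,1]² such that h_{i,j}(s,t) = conj(h_{j,i}(t,s)) and the matrix (h_{i,j}(s,t))_{i,j∈I} is positive semidefinite for every (s,t) ∈ [0,1]². Let g = (g_{i,j})_{i,j∈I} be the pointwise positive square root of h (as a matrix-valued function). Let ζ_i, ζ_i⁽ⁿ⁾ be vectors in L²([0,1]²) ⊗ ℂ^I defined by ζ_i = Σ_j g_{i,j} ⊗ e_j and ζ_i⁽ⁿ⁾ = Σ_j g_{i,j}⁽ⁿ⁾ ⊗ e_j, where g⁽ⁿ⁾ is the matrix square root of the discretized h⁽ⁿ⁾ = (E⁽ⁿ⁾ ⊗ E⁽ⁿ⁾)(h). If X_i, X_i⁽ⁿ⁾ are the corresponding creation-plus-annihilation operators on the Fock space, then ‖X_i − X_i⁽ⁿ⁾‖ ≤ 2 (Σ_j ‖g_{i,j} − g_{i,j}⁽ⁿ⁾‖_∞²)^{1/2}. -/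
open MeasureTheory
open scoped ComplexOrder

/-- Discretization `(E⁽ⁿ⁾ ⊗ E⁽ⁿ⁾)(F)` of a kernel on `[0,1]²`: replace `F` by its
average over each square `[a/n,(a+1)/n) × [b/n,(b+1)/n)`. -/
noncomputable def discAvg2 (n : ℕ) (F : ℝ × ℝ → ℂ) (p : ℝ × ℝ) : ℂ :=
  ∑ a : Fin n, ∑ b : Fin n,
    Set.indicator
      (Set.Ico ((a : ℝ) / n) (((a : ℝ) + 1) / n) ×ˢ
        Set.Ico ((b : ℝ) / n) (((b : ℝ) + 1) / n))
      (fun _ => (n : ℂ) ^ 2 *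
        ∫ s in Set.Icc ((a : ℝ) / n) (((a : ℝ) + 1) / n),
          ∫ t in Set.Icc ((b : ℝ) / n) (((b : ℝ) + 1) / n), F (s, t)) p

lemma aux_setIntegral_le {f : ℝ → ℝ} {s : Set ℝ} (hms : MeasurableSet s)
    (hvol : volume s ≠ ⊤) {C : ℝ} (hC : 0 ≤ C) (hb : ∀ x ∈ s, f x ≤ C) :
    ∫ x in s, f x ≤ C * (volume s).toReal := by
  by_cases hf : IntegrableOn f s volume
  · have h2 := MeasureTheory.setIntegral_mono_on hf
      (integrableOn_const hvol) hms hb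
    have h3 : ∫ x in s, f x ≤ C * volume.real s := by
      simpa [MeasureTheory.setIntegral_const, smul_eq_mul, mul_comm] using h2
    exact h3
  · rw [MeasureTheory.integral_undef hf]
    positivity

lemma aux_norm_setIntegral_le {f : ℝ → ℂ} {s : Set ℝ} (hms : MeasurableSet s)
    (hvol : volume s ≠ ⊤) {C : ℝ} (hC : 0 ≤ C) (hb : ∀ x ∈ s, ‖f x‖ ≤ C) :
    ‖∫ x in s, f x‖ ≤ C * (volume s).toReal := by
  calc ‖∫ x in s, f x‖ ≤ ∫ x in s, ‖f x‖ := norm_integral_le_integral_norm _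
    _ ≤ C * (volume s).toReal := aux_setIntegral_le hms hvol hC (fun x hx => hb x hx)

lemma aux_ind_sum_le_one (n : ℕ) (x : ℝ) :
    ∑ a : Fin n, Set.indicator (Set.Ico ((a:ℝ)/n) (((a:ℝ)+1)/n)) (fun _ => (1:ℝ)) x ≤ 1 := by
  classical
  rcases Nat.eq_zero_or_pos n with hn | hn
  · subst hn; simp
  have hn' : (0:ℝ) < n := by exact_mod_cast hn
  have hite : ∀ a : Fin n, Set.indicator (Set.Ico ((a:ℝ)/n) (((a:ℝ)+1)/n)) (fun _ => (1:ℝ)) x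
      = if x ∈ Set.Ico ((a:ℝ)/n) (((a:ℝ)+1)/n) then 1 else 0 := by
    intro a; simp [Set.indicator_apply]
  rw [Finset.sum_congr rfl fun a _ => hite a, Finset.sum_boole]
  norm_cast
  apply Finset.card_le_one.2
  intro a ha b hb
  simp only [Finset.mem_filter, Set.mem_Ico] at ha hb
  have h1 : (a:ℝ) < (b:ℝ) + 1 := by
    have := lt_of_le_of_lt ha.2.1 hb.2.2
    rw [div_lt_div_iff₀ hn' hn'] at this; push_cast at this
    nlinarith
  have h2 : (b:ℝ) < (a:ℝ) + 1 := by
    have := lt_of_le_of_lt hb.2.1 ha.2.2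
    rw [div_lt_div_iff₀ hn' hn'] at this; push_cast at this
    nlinarith
  have : (a:ℕ) = (b:ℕ) := by
    have h1' : (a:ℕ) < (b:ℕ) + 1 := by exact_mod_cast h1
    have h2' : (b:ℕ) < (a:ℕ) + 1 := by exact_mod_cast h2
    omega
  exact Fin.ext this

lemma aux_discAvg2_bound (n : ℕ) (F : ℝ × ℝ → ℂ) {B : ℝ} (hB0 : 0 ≤ B)
    (hbd : ∀ p ∈ Set.Icc (0:ℝ) 1 ×ˢ Set.Icc (0:ℝ) 1, ‖F p‖ ≤ B) (p : ℝ × ℝ) :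
    ‖discAvg2 n F p‖ ≤ B := by
  rcases Nat.eq_zero_or_pos n with hn | hn
  · subst hn; simp [discAvg2]; exact hB0
  have hn' : (0:ℝ) < n := by exact_mod_cast hn
  -- bound on each coefficient
  have hcoeff : ∀ a b : Fin n,
      ‖(n : ℂ) ^ 2 *
        ∫ s in Set.Icc ((a:ℝ)/n) (((a:ℝ)+1)/n),
          ∫ t in Set.Icc ((b:ℝ)/n) (((b:ℝ)+1)/n), F (s, t)‖ ≤ B := by
    intro a b
    have hsub : ∀ c : Fin n, Set.Icc ((c:ℝ)/n) (((c:ℝ)+1)/n) ⊆ Set.Icc (0:ℝ) 1 := by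
      intro c x hx
      have hc : ((c:ℝ) + 1) ≤ n := by exact_mod_cast Nat.succ_le_of_lt c.2
      constructor
      · exact le_trans (by positivity) hx.1
      · exact le_trans hx.2 (by rw [div_le_one hn']; exact hc)
    have hvol : ∀ c : Fin n,
        (volume (Set.Icc ((c:ℝ)/n) (((c:ℝ)+1)/n))).toReal = 1 / n := by
      intro c
      have he : ((c:ℝ)+1)/n - (c:ℝ)/n = 1/n := by
        rw [div_sub_div_same]; norm_num
      rw [Real.volume_Icc, he, ENNReal.toReal_ofReal (by positivity)]
    have hinner : ∀ s ∈ Set.Icc ((a:ℝ)/n) (((a:ℝ)+1)/n),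
        ‖∫ t in Set.Icc ((b:ℝ)/n) (((b:ℝ)+1)/n), F (s, t)‖ ≤ B * (1 / n) := by
      intro s hs
      have := aux_norm_setIntegral_le (f := fun t => F (s, t)) measurableSet_Icc
        (by rw [Real.volume_Icc]; exact ENNReal.ofReal_ne_top) hB0
        (fun t ht => hbd (s, t) ⟨hsub a hs, hsub b ht⟩)
      rwa [hvol b] at this
    have houter := aux_norm_setIntegral_le
      (f := fun s => ∫ t in Set.Icc ((b:ℝ)/n) (((b:ℝ)+1)/n), F (s, t)) measurableSet_Icc
      (by rw [Real.volume_Icc]; exact ENNReal.ofReal_ne_top) (by positivity) hinner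
    rw [hvol a] at houter
    rw [norm_mul, norm_pow, Complex.norm_natCast]
    have hle : (n:ℝ)^2 * ‖∫ s in Set.Icc ((a:ℝ)/n) (((a:ℝ)+1)/n),
          ∫ t in Set.Icc ((b:ℝ)/n) (((b:ℝ)+1)/n), F (s, t)‖
        ≤ (n:ℝ)^2 * (B * (1/n) * (1/n)) :=
      mul_le_mul_of_nonneg_left houter (by positivity)
    have heq : (n:ℝ)^2 * (B * (1/n) * (1/n)) = B := by
      field_simp
    rw [heq] at hle
    exact hle
  -- indicator bound
  have hterm : ∀ a b : Fin n,
      ‖Set.indicator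
        (Set.Ico ((a:ℝ)/n) (((a:ℝ)+1)/n) ×ˢ Set.Ico ((b:ℝ)/n) (((b:ℝ)+1)/n))
        (fun _ => (n : ℂ) ^ 2 *
          ∫ s in Set.Icc ((a:ℝ)/n) (((a:ℝ)+1)/n),
            ∫ t in Set.Icc ((b:ℝ)/n) (((b:ℝ)+1)/n), F (s, t)) p‖
      ≤ B * (Set.indicator (Set.Ico ((a:ℝ)/n) (((a:ℝ)+1)/n)) (fun _ => (1:ℝ)) p.1
          * Set.indicator (Set.Ico ((b:ℝ)/n) (((b:ℝ)+1)/n)) (fun _ => (1:ℝ)) p.2) := by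
    intro a b
    by_cases hp : p ∈ Set.Ico ((a:ℝ)/n) (((a:ℝ)+1)/n) ×ˢ Set.Ico ((b:ℝ)/n) (((b:ℝ)+1)/n)
    · rw [Set.indicator_of_mem hp, Set.indicator_of_mem hp.1, Set.indicator_of_mem hp.2]
      simpa using hcoeff a b
    · rw [Set.indicator_of_notMem hp, norm_zero]
      have i1 : (0:ℝ) ≤ Set.indicator (Set.Ico ((a:ℝ)/n) (((a:ℝ)+1)/n)) (fun _ => (1:ℝ)) p.1 :=
        Set.indicator_nonneg (fun _ _ => zero_le_one) _
      have i2 : (0:ℝ) ≤ Set.indicator (Set.Ico ((b:ℝ)/n) (((b:ℝ)+1)/n)) (fun _ => (1:ℝ)) p.2 :=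
        Set.indicator_nonneg (fun _ _ => zero_le_one) _
      positivity
  calc ‖discAvg2 n F p‖ ≤ ∑ a : Fin n, ∑ b : Fin n,
        ‖Set.indicator
          (Set.Ico ((a:ℝ)/n) (((a:ℝ)+1)/n) ×ˢ Set.Ico ((b:ℝ)/n) (((b:ℝ)+1)/n))
          (fun _ => (n : ℂ) ^ 2 *
            ∫ s in Set.Icc ((a:ℝ)/n) (((a:ℝ)+1)/n),
              ∫ t in Set.Icc ((b:ℝ)/n) (((b:ℝ)+1)/n), F (s, t)) p‖ := by
        refine le_trans (norm_sum_le _ _) (Finset.sum_le_sum fun a _ => norm_sum_le _ _)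
    _ ≤ ∑ a : Fin n, ∑ b : Fin n,
        B * (Set.indicator (Set.Ico ((a:ℝ)/n) (((a:ℝ)+1)/n)) (fun _ => (1:ℝ)) p.1
          * Set.indicator (Set.Ico ((b:ℝ)/n) (((b:ℝ)+1)/n)) (fun _ => (1:ℝ)) p.2) := by
        exact Finset.sum_le_sum fun a _ => Finset.sum_le_sum fun b _ => hterm a b
    _ = B * ((∑ a : Fin n, Set.indicator (Set.Ico ((a:ℝ)/n) (((a:ℝ)+1)/n)) (fun _ => (1:ℝ)) p.1)
          * (∑ b : Fin n, Set.indicator (Set.Ico ((b:ℝ)/n) (((b:ℝ)+1)/n)) (fun _ => (1:ℝ)) p.2)) := by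
        rw [Finset.sum_mul_sum]
        rw [Finset.mul_sum]
        exact Finset.sum_congr rfl fun a _ => by rw [Finset.mul_sum]
    _ ≤ B * (1 * 1) := by
        have s1 := aux_ind_sum_le_one n p.1
        have s2 := aux_ind_sum_le_one n p.2
        have n1 : (0:ℝ) ≤ ∑ a : Fin n, Set.indicator (Set.Ico ((a:ℝ)/n) (((a:ℝ)+1)/n)) (fun _ => (1:ℝ)) p.1 :=
          Finset.sum_nonneg fun a _ => Set.indicator_nonneg (fun _ _ => zero_le_one) _
        have n2 : (0:ℝ) ≤ ∑ b : Fin n, Set.indicator (Set.Ico ((b:ℝ)/n) (((b:ℝ)+1)/n)) (fun _ => (1:ℝ)) p.2 :=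
          Finset.sum_nonneg fun b _ => Set.indicator_nonneg (fun _ _ => zero_le_one) _
        exact mul_le_mul_of_nonneg_left (mul_le_mul s1 s2 n2 zero_le_one) hB0
    _ = B := by ring



/-- comparison of operator-valued semicircular generators.  With
`ζ_i = Σ_j g_{i,j} ⊗ e_j`, `ζ_i⁽ⁿ⁾ = Σ_j g⁽ⁿ⁾_{i,j} ⊗ e_j` (where `g`, `g⁽ⁿ⁾` are the
pointwise positive square roots of the kernel matrix `h` and of its discretization),
and `X_i = ℓ(ζ_i) + ℓ(ζ_i)*`, `X_i⁽ⁿ⁾ = ℓ(ζ_i⁽ⁿ⁾) + ℓ(ζ_i⁽ⁿ⁾)*` the corresponding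
creation-plus-annihilation operators (the creation operators satisfying the standard
norm bound `‖ℓ(ζ)+ℓ(ζ)*‖ ≤ 2‖⟨ζ,ζ⟩_{L^∞[0,1]}‖^{1/2}`), one has
`‖X_i − X_i⁽ⁿ⁾‖ ≤ 2 (Σ_j ‖g_{i,j} − g⁽ⁿ⁾_{i,j}‖_∞²)^{1/2}`. -/
theorem stmt14
    {I : Type*} [Fintype I]
    {A : Type*} [CStarAlgebra A]
    -- the kernels
    (h : I → I → ℝ × ℝ → ℂ)
    (hcont : ∀ i j, ContinuousOn (h i j) (Set.Icc (0:ℝ) 1 ×ˢ Set.Icc (0:ℝ) 1))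
    (hherm : ∀ i j s t, h i j (s, t) = starRingEnd ℂ (h j i (t, s)))
    (hpsd : ∀ p ∈ Set.Icc (0:ℝ) 1 ×ˢ Set.Icc (0:ℝ) 1,
      Matrix.PosSemidef (Matrix.of fun i j : I => h i j p))
    -- the pointwise positive square root g of h
    (g : I → I → ℝ × ℝ → ℂ)
    (hgherm : ∀ i j p, g i j p = starRingEnd ℂ (g j i p))
    (hgpsd : ∀ p ∈ Set.Icc (0:ℝ) 1 ×ˢ Set.Icc (0:ℝ) 1,
      Matrix.PosSemidef (Matrix.of fun i j : I => g i j p))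
    (hgsq : ∀ i j, ∀ p ∈ Set.Icc (0:ℝ) 1 ×ˢ Set.Icc (0:ℝ) 1,
      ∑ k, g i k p * g k j p = h i j p)
    -- the pointwise positive square roots gⁿ of the discretized kernels
    (gn : ℕ → I → I → ℝ × ℝ → ℂ)
    (hgnherm : ∀ n i j p, gn n i j p = starRingEnd ℂ (gn n j i p))
    (hgnpsd : ∀ n, ∀ p ∈ Set.Icc (0:ℝ) 1 ×ˢ Set.Icc (0:ℝ) 1,
      Matrix.PosSemidef (Matrix.of fun i j : I => gn n i j p))
    (hgnsq : ∀ n i j, ∀ p ∈ Set.Icc (0:ℝ) 1 ×ˢ Set.Icc (0:ℝ) 1,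
      ∑ k, gn n i k p * gn n k j p = discAvg2 n (h i j) p)
    -- the creation operators on the Fock space, with the standard C*-norm bound
    (ℓop : (I → ℝ × ℝ → ℂ) →ₗ[ℂ] A)
    (hℓ : ∀ ζ : I → ℝ × ℝ → ℂ,
      ‖ℓop ζ + star (ℓop ζ)‖ ≤ 2 * Real.sqrt (sSup
        ((fun s => ∑ j, ∫ t in Set.Icc (0:ℝ) 1, ‖ζ j (s, t)‖ ^ 2) ''
          Set.Icc (0:ℝ) 1))) :
    ∀ (n : ℕ) (i : I),
      ‖(ℓop (fun j => g i j) + star (ℓop (fun j => g i j))) -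
          (ℓop (fun j => gn n i j) + star (ℓop (fun j => gn n i j)))‖ ≤
        2 * Real.sqrt (∑ j,
          (sSup ((fun p : ℝ × ℝ => ‖g i j p - gn n i j p‖) ''
            (Set.Icc (0:ℝ) 1 ×ˢ Set.Icc (0:ℝ) 1))) ^ 2) := by
  intro n i
  classical
  obtain ⟨B₀, hB₀⟩ := (isCompact_Icc.prod isCompact_Icc).exists_bound_of_continuousOn (hcont i i)
  set B : ℝ := max B₀ 0 with hBdef
  have hB0 : 0 ≤ B := le_max_right _ _
  have hBbd : ∀ p ∈ Set.Icc (0:ℝ) 1 ×ˢ Set.Icc (0:ℝ) 1, ‖h i i p‖ ≤ B :=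
    fun p hp => le_trans (hB₀ p hp) (le_max_left _ _)
  -- trace identity for g
  have htr : ∀ p ∈ Set.Icc (0:ℝ) 1 ×ˢ Set.Icc (0:ℝ) 1,
      ∑ k, ‖g i k p‖ ^ 2 = (h i i p).re := by
    intro p hp
    have h1 := hgsq i i p hp
    have h2 : ∀ k : I, g i k p * g k i p = ((‖g i k p‖ ^ 2 : ℝ) : ℂ) := by
      intro k
      rw [hgherm k i p, Complex.mul_conj, Complex.normSq_eq_norm_sq]
    rw [Finset.sum_congr rfl (fun k _ => h2 k), ← Complex.ofReal_sum] at h1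
    rw [← h1, Complex.ofReal_re]
  have hgbd : ∀ j, ∀ p ∈ Set.Icc (0:ℝ) 1 ×ˢ Set.Icc (0:ℝ) 1,
      ‖g i j p‖ ≤ Real.sqrt B := by
    intro j p hp
    have hle : ‖g i j p‖ ^ 2 ≤ ∑ k, ‖g i k p‖ ^ 2 :=
      Finset.single_le_sum (f := fun k => ‖g i k p‖ ^ 2) (fun k _ => sq_nonneg _) (Finset.mem_univ j)
    have hre : (h i i p).re ≤ B :=
      le_trans (Complex.re_le_norm _) (by simpa using hBbd p hp)
    have hsq : ‖g i j p‖ ^ 2 ≤ B := by rw [htr p hp] at hle; linarith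
    have := Real.sqrt_le_sqrt hsq
    rwa [Real.sqrt_sq (norm_nonneg _)] at this
  -- trace identity for gn
  have htrn : ∀ p ∈ Set.Icc (0:ℝ) 1 ×ˢ Set.Icc (0:ℝ) 1,
      ∑ k, ‖gn n i k p‖ ^ 2 = (discAvg2 n (h i i) p).re := by
    intro p hp
    have h1 := hgnsq n i i p hp
    have h2 : ∀ k : I, gn n i k p * gn n k i p = ((‖gn n i k p‖ ^ 2 : ℝ) : ℂ) := by
      intro k
      rw [hgnherm n k i p, Complex.mul_conj, Complex.normSq_eq_norm_sq]
    rw [Finset.sum_congr rfl (fun k _ => h2 k), ← Complex.ofReal_sum] at h1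
    rw [← h1, Complex.ofReal_re]
  have hgnbd : ∀ j, ∀ p ∈ Set.Icc (0:ℝ) 1 ×ˢ Set.Icc (0:ℝ) 1,
      ‖gn n i j p‖ ≤ Real.sqrt B := by
    intro j p hp
    have hle : ‖gn n i j p‖ ^ 2 ≤ ∑ k, ‖gn n i k p‖ ^ 2 :=
      Finset.single_le_sum (f := fun k => ‖gn n i k p‖ ^ 2) (fun k _ => sq_nonneg _) (Finset.mem_univ j)
    have hre : (discAvg2 n (h i i) p).re ≤ B :=
      le_trans (Complex.re_le_norm _)
        (by simpa using aux_discAvg2_bound n (h i i) hB0 hBbd p)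
    have hsq : ‖gn n i j p‖ ^ 2 ≤ B := by rw [htrn p hp] at hle; linarith
    have := Real.sqrt_le_sqrt hsq
    rwa [Real.sqrt_sq (norm_nonneg _)] at this
  -- the difference vector
  set ζ : I → ℝ × ℝ → ℂ := (fun j => g i j) - (fun j => gn n i j) with hζdef
  have hζapp : ∀ j p, ζ j p = g i j p - gn n i j p := fun j p => rfl
  set M : I → ℝ := fun j =>
    sSup ((fun p : ℝ × ℝ => ‖g i j p - gn n i j p‖) ''
      (Set.Icc (0:ℝ) 1 ×ˢ Set.Icc (0:ℝ) 1)) with hMdef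
  have hMbd : ∀ j, BddAbove ((fun p : ℝ × ℝ => ‖g i j p - gn n i j p‖) ''
      (Set.Icc (0:ℝ) 1 ×ˢ Set.Icc (0:ℝ) 1)) := by
    intro j
    refine ⟨Real.sqrt B + Real.sqrt B, ?_⟩
    rintro _ ⟨p, hp, rfl⟩
    have : ‖g i j p - gn n i j p‖
        ≤ ‖g i j p‖ + ‖gn n i j p‖ := by
      simpa [sub_eq_add_neg] using norm_add_le (g i j p) (-(gn n i j p))
    exact le_trans this (add_le_add (hgbd j p hp) (hgnbd j p hp))
  have hMpt : ∀ j, ∀ p ∈ Set.Icc (0:ℝ) 1 ×ˢ Set.Icc (0:ℝ) 1,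
      ‖g i j p - gn n i j p‖ ≤ M j :=
    fun j p hp => le_csSup (hMbd j) ⟨p, hp, rfl⟩
  -- rewrite the operator difference
  have hXeq : (ℓop (fun j => g i j) + star (ℓop (fun j => g i j))) -
      (ℓop (fun j => gn n i j) + star (ℓop (fun j => gn n i j)))
      = ℓop ζ + star (ℓop ζ) := by
    rw [hζdef, map_sub, star_sub]; abel
  -- bound the sSup in hℓ
  have hS : sSup ((fun s => ∑ j, ∫ t in Set.Icc (0:ℝ) 1,
        ‖ζ j (s, t)‖ ^ 2) '' Set.Icc (0:ℝ) 1) ≤ ∑ j, M j ^ 2 := by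
    apply Real.sSup_le
    · rintro _ ⟨s, hs, rfl⟩
      refine Finset.sum_le_sum fun j _ => ?_
      have hb : ∀ t ∈ Set.Icc (0:ℝ) 1, ‖ζ j (s, t)‖ ^ 2 ≤ M j ^ 2 := by
        intro t ht
        rw [hζapp]
        exact pow_le_pow_left₀ (norm_nonneg _) (hMpt j (s, t) ⟨hs, ht⟩) 2
      have := aux_setIntegral_le (f := fun t => ‖ζ j (s, t)‖ ^ 2)
        measurableSet_Icc (by rw [Real.volume_Icc]; exact ENNReal.ofReal_ne_top)
        (sq_nonneg (M j)) hb
      simpa using this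
    · positivity
  calc ‖(ℓop (fun j => g i j) + star (ℓop (fun j => g i j))) -
      (ℓop (fun j => gn n i j) + star (ℓop (fun j => gn n i j)))‖
      = ‖ℓop ζ + star (ℓop ζ)‖ := by rw [hXeq]
    _ ≤ 2 * Real.sqrt (sSup ((fun s => ∑ j, ∫ t in Set.Icc (0:ℝ) 1,
          ‖ζ j (s, t)‖ ^ 2) '' Set.Icc (0:ℝ) 1)) := hℓ ζ
    _ ≤ 2 * Real.sqrt (∑ j, M j ^ 2) :=
        mul_le_mul_of_nonneg_left (Real.sqrt_le_sqrt hS) (by norm_num)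
end

section
/- Let X, X' be jointly Gaussian mean-zero random self-adjoint n×n matrices, and define the block matrices Y = X ⊕ X' ∈ M_{2n}. Then for any U, V, W ∈ Mₙ with ‖U‖, ‖V‖, ‖W‖ ≤ 1 and an independent copy Ỹ of Y, the quantity ‖E[X U X̃' V X W X̃']‖ is bounded by sup over matrices of norm ≤ 1 of ‖E[Y A Ỹ B Y C Ỹ]‖, via the block identity X U X̃' V X W X̃' ⊕ 0 = Y · (U⊕0) · Ỹ · (0V;00) · Y · (0 0;0 W) · Ỹ · (0 0; I 0). -/
open MeasureTheory Matrix
open scoped Matrix.Norms.L2Operator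

/-- Entrywise expectation of a random matrix. -/
noncomputable def matExp {Ω : Type*} [MeasureSpace Ω] {m l : Type*}
    (F : Ω → Matrix m l ℂ) : Matrix m l ℂ :=
  Matrix.of fun i j => ∫ ω, F ω i j

/-- Operator norm of a complex matrix (acting on Euclidean space). -/
noncomputable def matOpNorm {m : Type*} [Fintype m] [DecidableEq m]
    (A : Matrix m m ℂ) : ℝ :=
  ‖Matrix.toEuclideanCLM (𝕜 := ℂ) A‖

lemma matOpNorm_eq_l2 {m : Type*} [Fintype m] [DecidableEq m] (A : Matrix m m ℂ) :
    matOpNorm A = ‖A‖ := rfl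

/-- Auxiliary: the operator norm of an upper-right block matrix equals the norm of the block. -/
lemma aux_norm_ur {m : Type*} [Fintype m] [DecidableEq m] (M : Matrix m m ℂ) :
    ‖(fromBlocks 0 M 0 0 : Matrix (m ⊕ m) (m ⊕ m) ℂ)‖ = ‖M‖ := by
  set A : Matrix (m⊕m) (m⊕m) ℂ := fromBlocks 0 M 0 0 with hA
  have happ : ∀ (x : EuclideanSpace ℂ (m⊕m)) (xr : EuclideanSpace ℂ m),
      (∀ j, xr j = x (Sum.inr j)) →
      ‖Matrix.toEuclideanCLM (𝕜 := ℂ) A x‖ = ‖Matrix.toEuclideanCLM (𝕜 := ℂ) M xr‖ := by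
    intro x xr hxr
    rw [EuclideanSpace.norm_eq, EuclideanSpace.norm_eq]
    congr 1
    rw [Fintype.sum_sum_type]
    have h1 : ∀ i : m, (Matrix.toEuclideanCLM (𝕜 := ℂ) A x) (Sum.inl i)
        = (Matrix.toEuclideanCLM (𝕜 := ℂ) M xr) i := by
      intro i
      show ((fromBlocks 0 M 0 0 : Matrix (m⊕m) (m⊕m) ℂ) *ᵥ (fun j => x j)) (Sum.inl i)
        = (M *ᵥ fun j => xr j) i
      simp [Matrix.mulVec, Matrix.fromBlocks, dotProduct, Fintype.sum_sum_type, hxr]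
    have h2 : ∀ i : m, (Matrix.toEuclideanCLM (𝕜 := ℂ) A x) (Sum.inr i) = 0 := by
      intro i
      show ((fromBlocks 0 M 0 0 : Matrix (m⊕m) (m⊕m) ℂ) *ᵥ (fun j => x j)) (Sum.inr i) = 0
      simp [Matrix.mulVec, Matrix.fromBlocks, dotProduct, Fintype.sum_sum_type]
    simp only [h1, h2, norm_zero]
    simp
  apply le_antisymm
  · rw [Matrix.cstar_norm_def]
    apply ContinuousLinearMap.opNorm_le_bound _ (norm_nonneg M)
    intro x
    set xr : EuclideanSpace ℂ m := (WithLp.equiv 2 (m → ℂ)).symm (fun j => x (Sum.inr j)) with hxr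
    have hxrj : ∀ j, xr j = x (Sum.inr j) := fun j => rfl
    rw [happ x xr hxrj]
    calc ‖Matrix.toEuclideanCLM (𝕜 := ℂ) M xr‖
        ≤ ‖Matrix.toEuclideanCLM (𝕜 := ℂ) M‖ * ‖xr‖ := ContinuousLinearMap.le_opNorm _ _
      _ ≤ ‖M‖ * ‖x‖ := by
          apply mul_le_mul_of_nonneg_left _ (norm_nonneg _)
          rw [EuclideanSpace.norm_eq, EuclideanSpace.norm_eq]
          apply Real.sqrt_le_sqrt
          rw [Fintype.sum_sum_type]
          have h0 : (0:ℝ) ≤ ∑ i : m, ‖x (Sum.inl i)‖^2 :=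
            Finset.sum_nonneg fun _ _ => sq_nonneg _
          have he : ∑ j : m, ‖xr j‖^2 = ∑ j : m, ‖x (Sum.inr j)‖^2 := by
            simp [hxrj]
          linarith
  · rw [Matrix.cstar_norm_def (n := m)]
    apply ContinuousLinearMap.opNorm_le_bound _ (norm_nonneg _)
    intro y
    set x : EuclideanSpace ℂ (m⊕m) :=
      (WithLp.equiv 2 ((m⊕m) → ℂ)).symm (Sum.elim (fun _ => (0:ℂ)) (fun j => y j)) with hx
    have hxrj : ∀ j, y j = x (Sum.inr j) := fun j => rfl
    have hxn : ‖x‖ = ‖y‖ := by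
      rw [EuclideanSpace.norm_eq, EuclideanSpace.norm_eq]
      congr 1
      rw [Fintype.sum_sum_type]
      have hl : ∀ i : m, x (Sum.inl i) = 0 := fun i => rfl
      simp [hl, hxrj]
    calc ‖Matrix.toEuclideanCLM (𝕜 := ℂ) M y‖
        = ‖Matrix.toEuclideanCLM (𝕜 := ℂ) A x‖ := (happ x y hxrj).symm
      _ ≤ ‖Matrix.toEuclideanCLM (𝕜 := ℂ) A‖ * ‖x‖ := ContinuousLinearMap.le_opNorm _ _
      _ = ‖A‖ * ‖y‖ := by rw [hxn]; rfl

/-- Auxiliary: the operator norm of a lower-left block matrix equals the norm of the block. -/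
lemma aux_norm_ll {m : Type*} [Fintype m] [DecidableEq m] (M : Matrix m m ℂ) :
    ‖(fromBlocks 0 0 M 0 : Matrix (m ⊕ m) (m ⊕ m) ℂ)‖ = ‖M‖ := by
  have h : (fromBlocks 0 0 M 0 : Matrix (m ⊕ m) (m ⊕ m) ℂ)
      = (fromBlocks 0 Mᴴ 0 0 : Matrix (m ⊕ m) (m ⊕ m) ℂ)ᴴ := by
    simp [Matrix.fromBlocks_conjTranspose]
  rw [h, Matrix.l2_opNorm_conjTranspose, aux_norm_ur, Matrix.l2_opNorm_conjTranspose]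

/-- Auxiliary: expectation commutes with placing a matrix in the upper-right block. -/
lemma aux_matExp_ur {Ω : Type*} [MeasureSpace Ω] {m : Type*}
    (F : Ω → Matrix m m ℂ) :
    matExp (fun ω => (fromBlocks 0 (F ω) 0 0 : Matrix (m ⊕ m) (m ⊕ m) ℂ))
      = fromBlocks 0 (matExp F) 0 0 := by
  ext i j
  cases i <;> cases j <;>
    simp [matExp, Matrix.fromBlocks]

/-- reduction of the multi-matrix alignment parameter to the single-pair
alignment parameter of block direct sums.  For mean-zero self-adjoint random matrices
`X, X'` with independent copies `X̃, X̃'`, setting `Y = X ⊕ X'` and `Ỹ = X̃ ⊕ X̃'`,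
for all contractions `U, V, W` there are contractions `A, B, C` with
`‖E[X U X̃' V X W X̃']‖ ≤ ‖E[Y A Ỹ B Y C Ỹ]‖`; in particular `‖E[X U X̃' V X W X̃']‖`
is bounded by the supremum over contractions of `‖E[Y A Ỹ B Y C Ỹ]‖`. -/
theorem stmt17
    {Ω : Type*} [MeasureSpace Ω] [IsProbabilityMeasure (volume : Measure Ω)]
    (n : ℕ)
    (X X' Xt Xt' : Ω → Matrix (Fin n) (Fin n) ℂ)
    (hXsa : ∀ ω, (X ω).IsHermitian) (hX'sa : ∀ ω, (X' ω).IsHermitian)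
    (hXtsa : ∀ ω, (Xt ω).IsHermitian) (hXt'sa : ∀ ω, (Xt' ω).IsHermitian)
    (hXmean : matExp X = 0) (hX'mean : matExp X' = 0)
    (hXtmean : matExp Xt = 0) (hXt'mean : matExp Xt' = 0) :
    ∀ U V W : Matrix (Fin n) (Fin n) ℂ,
      matOpNorm U ≤ 1 → matOpNorm V ≤ 1 → matOpNorm W ≤ 1 →
      ∃ A B C : Matrix (Fin n ⊕ Fin n) (Fin n ⊕ Fin n) ℂ,
        matOpNorm A ≤ 1 ∧ matOpNorm B ≤ 1 ∧ matOpNorm C ≤ 1 ∧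
        matOpNorm (matExp (fun ω => X ω * U * Xt' ω * V * X ω * W * Xt' ω)) ≤
          matOpNorm (matExp (fun ω =>
            Matrix.fromBlocks (X ω) 0 0 (X' ω) * A *
              Matrix.fromBlocks (Xt ω) 0 0 (Xt' ω) * B *
                Matrix.fromBlocks (X ω) 0 0 (X' ω) * C *
                  Matrix.fromBlocks (Xt ω) 0 0 (Xt' ω))) := by
  intro U V W hU hV hW
  refine ⟨fromBlocks 0 U 0 0, fromBlocks 0 0 V 0, fromBlocks 0 W 0 0, ?_, ?_, ?_, ?_⟩
  · rw [matOpNorm_eq_l2, aux_norm_ur]; exact hU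
  · rw [matOpNorm_eq_l2, aux_norm_ll]; exact hV
  · rw [matOpNorm_eq_l2, aux_norm_ur]; exact hW
  · have hprod : (fun ω =>
        Matrix.fromBlocks (X ω) 0 0 (X' ω) * fromBlocks 0 U 0 0 *
          Matrix.fromBlocks (Xt ω) 0 0 (Xt' ω) * fromBlocks 0 0 V 0 *
            Matrix.fromBlocks (X ω) 0 0 (X' ω) * fromBlocks 0 W 0 0 *
              Matrix.fromBlocks (Xt ω) 0 0 (Xt' ω))
        = fun ω => (fromBlocks 0 (X ω * U * Xt' ω * V * X ω * W * Xt' ω) 0 0 :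
            Matrix (Fin n ⊕ Fin n) (Fin n ⊕ Fin n) ℂ) := by
      funext ω
      simp [Matrix.fromBlocks_multiply, Matrix.mul_assoc]
    rw [hprod, aux_matExp_ur, matOpNorm_eq_l2, matOpNorm_eq_l2, aux_norm_ur]
end
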